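/- arXiv:1507.06703 — 9 statements merged into one kernel-verified Lean document; each statement's English description precedes it below -/
import Mathlib

section
/- Let (X, π) be a finite set with a partition, let X^eq be the union of blocks of maximal cardinality and X^neq its complement, and suppose δ₁|X^eq| ≤ |X^neq| ≤ δ₂|X^eq| with δ₁ ≤ δ₂ ≤ ε(δ₁ + 1) for reals δ₁, δ₂, ε ≥ 0. Then for any permutation α of X, the set D of microstates where entropy strictly decreases satisfies |D| ≤ ε|X|. -/
open Finset

/-
A microstate whose entropy strictly drops under `α` is sent to a block that is not of maximal
size, so by injectivity of `α` there are at most `|X^neq|` of them. The hypotheses on the ratio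
`|X^neq| / |X^eq|` then give `|X^neq| ≤ δ₂|X^eq| ≤ ε(δ₁|X^eq| + |X^eq|) ≤ ε(|X^neq| + |X^eq|)`.
-/

theorem card_filter_comp_lt_le_card_compl_filter_isMax {X β : Type*} [Fintype X] [DecidableEq X]
    [LinearOrder β] (g : X → β) {α : X → X} (hα : Function.Injective α) :
    #{i | g (α i) < g i} ≤ #(univ.filter (fun i => ∀ j, g j ≤ g i))ᶜ :=
  card_le_card_of_injOn α
    (fun i hi => by simpa using ⟨i, (mem_filter.1 hi).2⟩)
    hα.injOn

theorem le_mul_add_of_mul_le_of_le_mul {a b δ₁ δ₂ ε : ℝ} (ha : 0 ≤ a) (hε : 0 ≤ ε)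
    (h2e : δ₂ ≤ ε * (δ₁ + 1)) (hlow : δ₁ * a ≤ b) (hhigh : b ≤ δ₂ * a) :
    b ≤ ε * (a + b) :=
  calc b ≤ δ₂ * a := hhigh
    _ ≤ ε * (δ₁ + 1) * a := mul_le_mul_of_nonneg_right h2e ha
    _ = ε * (a + δ₁ * a) := by ring
    _ ≤ ε * (a + b) := by gcongr

theorem stmt4_general {X : Type*} [Fintype X] [DecidableEq X]
    (blk : X → ℕ)
    (Xeq : Finset X) (hXeq : Xeq = univ.filter (fun i => ∀ j, blk j ≤ blk i))
    (δ₁ δ₂ ε : ℝ) (hε : 0 ≤ ε)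
    (h2e : δ₂ ≤ ε * (δ₁ + 1))
    (hlow : δ₁ * Xeq.card ≤ ((Xeqᶜ).card : ℝ))
    (hhigh : ((Xeqᶜ).card : ℝ) ≤ δ₂ * Xeq.card)
    (α : X ≃ X) :
    ((univ.filter (fun i => blk (α i) < blk i)).card : ℝ) ≤ ε * Fintype.card X := by
  have hD : #{i | blk (α i) < blk i} ≤ #Xeqᶜ :=
    hXeq ▸ card_filter_comp_lt_le_card_compl_filter_isMax blk α.injective
  calc (#{i | blk (α i) < blk i} : ℝ) ≤ #Xeqᶜ := by exact_mod_cast hD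
    _ ≤ ε * (#Xeq + #Xeqᶜ) := le_mul_add_of_mul_le_of_le_mul (by positivity) hε h2e hlow hhigh
    _ = ε * Fintype.card X := by rw [← Nat.cast_add, card_add_card_compl]

/-- If the equilibrium (union of blocks of maximal size) dominates,
`δ₁|X^eq| ≤ |X^neq| ≤ δ₂|X^eq|` with `δ₁ ≤ δ₂ ≤ ε(δ₁+1)`, then any permutation
has at most `ε|X|` microstates of strictly decreasing entropy. -/
theorem stmt4 {X A : Type*} [Fintype X] [DecidableEq X] [DecidableEq A]
    (f : X → A) (hf : Function.Surjective f)
    (blk : X → ℕ) (hblk : ∀ i, blk i = (univ.filter (fun j => f j = f i)).card)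
    (Xeq : Finset X) (hXeq : Xeq = univ.filter (fun i => ∀ j, blk j ≤ blk i))
    (δ₁ δ₂ ε : ℝ) (hδ₁ : 0 ≤ δ₁) (hε : 0 ≤ ε)
    (h12 : δ₁ ≤ δ₂) (h2e : δ₂ ≤ ε * (δ₁ + 1))
    (hlow : δ₁ * Xeq.card ≤ ((Xeqᶜ).card : ℝ))
    (hhigh : ((Xeqᶜ).card : ℝ) ≤ δ₂ * Xeq.card)
    (α : X ≃ X) :
    ((univ.filter (fun i => blk (α i) < blk i)).card : ℝ) ≤ ε * Fintype.card X :=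
  stmt4_general blk Xeq hXeq δ₁ δ₂ ε hε h2e hlow hhigh α
end

section
/- Let (X, A, f, α) be a micro-macro dynamical system such that for every pair a, b ∈ A with |f⁻¹(a)| < |f⁻¹(b)| we have T_{ab} ≤ ε/|A_{<b}|, where A_{<b} = {a ∈ A : |f⁻¹(a)| < |f⁻¹(b)|}. Then |D| ≤ ε|X|. -/
/-!
Split `D` according to the pair `(f (α i), f i) = (a, b)`; only pairs with `|f⁻¹(a)| < |f⁻¹(b)|`
occur. The pair `(a, b)` contributes `T_{ab} |f⁻¹(b)| ≤ ε |f⁻¹(b)| / |A_{<b}|` points, so the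
`|A_{<b}|` pairs with second entry `b` contribute at most `ε |f⁻¹(b)|`, and summing over `b`
gives `ε |X|`.
-/

open Finset

theorem Finset.sum_le_of_forall_le_div_card {ι : Type*} {s : Finset ι} {g : ι → ℝ} {c : ℝ}
    (hc : 0 ≤ c) (hg : ∀ a ∈ s, g a ≤ c / #s) : ∑ a ∈ s, g a ≤ c := by
  rcases s.eq_empty_or_nonempty with rfl | hs
  · simpa using hc
  have hs' : (#s : ℝ) ≠ 0 := by exact_mod_cast hs.card_pos.ne'
  calc ∑ a ∈ s, g a ≤ #s • (c / #s) := sum_le_card_nsmul s g _ hg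
    _ = c := by rw [nsmul_eq_mul, mul_div_cancel₀ _ hs']

section Fibers

variable {X A : Type*} [Fintype X] [Fintype A] [DecidableEq A]

theorem Fintype.card_eq_sum_card_fiber (f : X → A) :
    Fintype.card X = ∑ b, #{i | f i = b} :=
  card_eq_sum_card_fiberwise fun _ _ => mem_coe.2 (mem_univ _)

theorem card_filter_weight_lt_eq_sum (w : A → ℕ) (f g : X → A) :
    #{i | w (g i) < w (f i)} = ∑ b, ∑ a ∈ {a | w a < w b}, #{i | f i = b ∧ g i = a} := by
  rw [card_eq_sum_card_fiberwise (f := f) (t := univ) fun _ _ => mem_coe.2 (mem_univ _)]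
  refine sum_congr rfl fun b _ => ?_
  rw [card_eq_sum_card_fiberwise (f := g) (t := {a | w a < w b})]
  · refine sum_congr rfl fun a ha => congrArg card ?_
    ext i
    simp only [mem_filter, mem_univ, true_and] at ha ⊢
    constructor
    · rintro ⟨⟨-, hb⟩, ha⟩
      exact ⟨hb, ha⟩
    · rintro ⟨rfl, rfl⟩
      exact ⟨⟨ha, rfl⟩, rfl⟩
  · intro i hi
    simp only [coe_filter, mem_filter, mem_univ, true_and] at hi ⊢
    exact hi.2 ▸ hi.1

end Fibers

theorem stmt6_general {X A : Type*} [Fintype X] [Fintype A] [DecidableEq A]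
    (f : X → A) (α : X → X)
    (fib : A → ℕ) (hfib : ∀ a, fib a = (univ.filter (fun i => f i = a)).card)
    (T : A → A → ℝ)
    (hT : ∀ a b, T a b = ((univ.filter (fun i => f i = b ∧ f (α i) = a)).card : ℝ) / fib b)
    (ε : ℝ) (hε : 0 ≤ ε)
    (hTb : ∀ a b, fib a < fib b →
      T a b ≤ ε / ((univ.filter (fun a' => fib a' < fib b)).card : ℝ)) :
    ((univ.filter (fun i => fib (f (α i)) < fib (f i))).card : ℝ) ≤ ε * Fintype.card X := by
  have transitions_le : ∀ a b, fib a < fib b →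
      (#{i | f i = b ∧ f (α i) = a} : ℝ) ≤ ε * fib b / #{a' | fib a' < fib b} := by
    intro a b hab
    have hb : (0 : ℝ) < fib b := by exact_mod_cast hab.trans_le' (Nat.zero_le _)
    rw [mul_div_right_comm, ← div_le_iff₀ hb, ← hT]
    exact hTb a b hab
  calc (#{i | fib (f (α i)) < fib (f i)} : ℝ)
      = ∑ b, ∑ a ∈ {a | fib a < fib b}, (#{i | f i = b ∧ f (α i) = a} : ℝ) := by
        rw [card_filter_weight_lt_eq_sum]
        push_cast
        rfl
    _ ≤ ∑ b, ε * fib b := sum_le_sum fun b _ =>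
        sum_le_of_forall_le_div_card (by positivity) fun a ha =>
          transitions_le a b (by simpa using ha)
    _ = ε * Fintype.card X := by
        rw [← mul_sum, Fintype.card_eq_sum_card_fiber f]
        simp only [hfib, Nat.cast_sum]

/-- If `T_{ab} ≤ ε/|A_{<b}|` whenever `|f⁻¹(a)| < |f⁻¹(b)|`, then `|D| ≤ ε|X|`. -/
theorem stmt6 {X A : Type*} [Fintype X] [Fintype A] [DecidableEq A]
    (f : X → A) (hf : Function.Surjective f) (α : X → X)
    (fib : A → ℕ) (hfib : ∀ a, fib a = (univ.filter (fun i => f i = a)).card)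
    (T : A → A → ℝ)
    (hT : ∀ a b, T a b = ((univ.filter (fun i => f i = b ∧ f (α i) = a)).card : ℝ) / fib b)
    (ε : ℝ) (hε : 0 ≤ ε)
    (hTb : ∀ a b, fib a < fib b →
      T a b ≤ ε / ((univ.filter (fun a' => fib a' < fib b)).card : ℝ)) :
    ((univ.filter (fun i => fib (f (α i)) < fib (f i))).card : ℝ) ≤ ε * Fintype.card X :=
  stmt6_general f α fib hfib T hT ε hε hTb
end

section
/- Let (X, A, f, α) be an invertible micro-macro dynamical system and suppose there exists a map t : A → A and ε ∈ [0, 1/2) such that T_{t(b)b} ≥ 1 − ε for all b ∈ A, and moreover ε is small enough that S(a) < S(b) implies S(a) < S(b) + ln(1 − ε) for all a, b ∈ A. Then |D| ≤ ε|X|. -/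
/-!
Since `α` is injective, the at least `(1 - ε)|f⁻¹(b)|` points of `f⁻¹(b)` that `α` sends into
`f⁻¹(t b)` force `|f⁻¹(t b)| ≥ (1 - ε)|f⁻¹(b)|`, i.e. `S (t b) ≥ S b + ln (1 - ε)`; by the smallness
of `ε` this rules out `S (t b) < S b`. Hence those points lie outside `D`, so `D` meets each fibre
`f⁻¹(b)` in at most `ε|f⁻¹(b)|` points, and summing over the fibres gives `|D| ≤ ε|X|`.
-/

open Finset

theorem Real.log_add_log_le_log_of_mul_le {c m n : ℝ} (hc : 0 < c) (hm : 0 < m) (h : c * m ≤ n) :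
    Real.log m + Real.log c ≤ Real.log n := by
  rw [add_comm, ← Real.log_mul hc.ne' hm.ne']
  exact Real.log_le_log (mul_pos hc hm) h

section Counting

variable {X A : Type*} [Fintype X] [DecidableEq A]

theorem card_le_mul_card_of_forall_fiber [Fintype A] (f : X → A) (D : Finset X) (c : ℝ)
    (h : ∀ b, ((D.filter (f · = b)).card : ℝ) ≤ c * (univ.filter (f · = b)).card) :
    (D.card : ℝ) ≤ c * Fintype.card X := by
  calc (D.card : ℝ) = ∑ b, ((D.filter (f · = b)).card : ℝ) := by
        rw [card_eq_sum_card_fiberwise fun i _ => mem_univ (f i)]; push_cast; rfl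
    _ ≤ ∑ b, c * ((univ.filter (f · = b)).card : ℝ) := sum_le_sum fun b _ => h b
    _ = c * Fintype.card X := by
        rw [← mul_sum, ← Nat.cast_sum, ← card_eq_sum_card_fiberwise fun i _ => mem_univ (f i)]
        rfl

theorem card_filter_and_map_le (f : X → A) (α : X ≃ X) (a b : A) :
    (univ.filter fun i => f i = b ∧ f (α i) = a).card ≤ (univ.filter fun i => f i = a).card :=
  card_le_card_of_injOn α (fun i hi => by simp_all) α.injective.injOn

end Counting

theorem Finset.card_le_mul_of_disjoint {X : Type*} {s e F : Finset X}
    (hs : s ⊆ F) (he : e ⊆ F) (hse : Disjoint s e) {c : ℝ} (h : (1 - c) * F.card ≤ e.card) :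
    (s.card : ℝ) ≤ c * F.card := by
  have : ((s.card + e.card : ℕ) : ℝ) ≤ F.card := by
    rw [← card_disjUnion s e hse]
    exact_mod_cast card_le_card fun x hx => (mem_disjUnion.1 hx).elim (@hs x) (@he x)
  push_cast at this
  linarith

theorem stmt7_general {X A : Type*} [Fintype X] [Fintype A] [DecidableEq A]
    (f : X → A) (α : X ≃ X)
    (fib : A → ℕ) (hfib : ∀ a, fib a = (univ.filter (fun i => f i = a)).card)
    (S : A → ℝ) (hS : ∀ a, S a = Real.log (fib a))
    (T : A → A → ℝ)
    (hT : ∀ a b, T a b = ((univ.filter (fun i => f i = b ∧ f (α i) = a)).card : ℝ) / fib b)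
    (t : A → A) (ε : ℝ) (hε : ε ∈ Set.Ico (0 : ℝ) (1 / 2))
    (ht : ∀ b, 1 - ε ≤ T (t b) b)
    (hsmall : ∀ a b, S a < S b → S a < S b + Real.log (1 - ε)) :
    ((univ.filter (fun i => S (f (α i)) < S (f i))).card : ℝ) ≤ ε * Fintype.card X := by
  have hε1 : 0 < 1 - ε := by linarith [hε.2]
  set E : A → Finset X := fun b => univ.filter fun i => f i = b ∧ f (α i) = t b
  -- An empty fibre would give `T (t b) b = 0` through `x / 0 = 0`.
  have hfib_pos : ∀ b, (0 : ℝ) < fib b := by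
    intro b
    by_contra! h0
    have := ht b
    rw [hT, le_antisymm h0 (Nat.cast_nonneg _), div_zero] at this
    linarith
  have hstay : ∀ b, (1 - ε) * fib b ≤ (E b).card := fun b =>
    (le_div_iff₀ (hfib_pos b)).1 (hT (t b) b ▸ ht b)
  have hS_le : ∀ b, S b ≤ S (t b) := by
    intro b
    by_contra! hlt
    refine (hsmall _ _ hlt).not_ge ?_
    rw [hS, hS]
    refine Real.log_add_log_le_log_of_mul_le hε1 (hfib_pos b) ((hstay b).trans ?_)
    rw [hfib]
    exact_mod_cast card_filter_and_map_le f α _ _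
  refine card_le_mul_card_of_forall_fiber f _ ε fun b => ?_
  refine card_le_mul_of_disjoint (e := E b) (filter_subset_filter _ (subset_univ _))
    (fun i hi => by simp_all [E]) (disjoint_left.2 fun i hD hE => ?_) (hfib b ▸ hstay b)
  simp only [E, mem_filter, mem_univ, true_and] at hD hE
  exact (hS_le b).not_gt (hE.2 ▸ hD.2 ▸ hD.1)

/-- If the stochastic map is nearly deterministic (`T_{t(b)b} ≥ 1 - ε`) and `ε` is
small enough that `S(a) < S(b)` implies `S(a) < S(b) + ln(1-ε)`, then `|D| ≤ ε|X|`. -/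
theorem stmt7 {X A : Type*} [Fintype X] [Fintype A] [DecidableEq A]
    (f : X → A) (hf : Function.Surjective f) (α : X ≃ X)
    (fib : A → ℕ) (hfib : ∀ a, fib a = (univ.filter (fun i => f i = a)).card)
    (S : A → ℝ) (hS : ∀ a, S a = Real.log (fib a))
    (T : A → A → ℝ)
    (hT : ∀ a b, T a b = ((univ.filter (fun i => f i = b ∧ f (α i) = a)).card : ℝ) / fib b)
    (t : A → A) (ε : ℝ) (hε : ε ∈ Set.Ico (0 : ℝ) (1 / 2))
    (ht : ∀ b, 1 - ε ≤ T (t b) b)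
    (hsmall : ∀ a b, S a < S b → S a < S b + Real.log (1 - ε)) :
    ((univ.filter (fun i => S (f (α i)) < S (f i))).card : ℝ) ≤ ε * Fintype.card X :=
  stmt7_general f α fib hfib S hS T hT t ε hε ht hsmall
end

section
/- Let (X, A, f, α, r) be a reversible micro-macro dynamical system (r an involution on X with rαr = α⁻¹) that is entropy preserving, i.e. S(r(i)) = S(i) for all i. Then the number of microstates where entropy strictly increases equals the number where it strictly decreases: |I| = |D|. -/
open Finset

/-- For an entropy preserving reversible micro-macro dynamical system, `|I| = |D|`. -/
theorem stmt8 {X A : Type*} [Fintype X] [DecidableEq A]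
    (f : X → A) (hf : Function.Surjective f) (α : X ≃ X)
    (r : X → X) (hr2 : ∀ i, r (r i) = i) (hrar : ∀ i, r (α (r i)) = α.symm i)
    (S : X → ℝ)
    (hS : ∀ i, S i = Real.log ((univ.filter (fun j => f j = f i)).card))
    (hSr : ∀ i, S (r i) = S i) :
    (univ.filter (fun i => S i < S (α i))).card
      = (univ.filter (fun i => S (α i) < S i)).card := by
  have hra : ∀ i, α (r i) = r (α.symm i) := by
    intro i
    have := congrArg r (hrar i)
    rwa [hr2] at this
  apply Finset.card_bij (fun i _ => r (α i))
  · intro i hi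
    simp only [mem_filter, mem_univ, true_and] at hi ⊢
    rw [hSr, hra, Equiv.symm_apply_apply, hSr]
    exact hi
  · intro a ha b hb h
    have := congrArg (fun x => α.symm (r x)) h
    have ha' : α.symm (r (r (α a))) = a := by rw [hr2, Equiv.symm_apply_apply]
    have hb' : α.symm (r (r (α b))) = b := by rw [hr2, Equiv.symm_apply_apply]
    rw [ha', hb'] at this
    exact this
  · intro j hj
    simp only [mem_filter, mem_univ, true_and] at hj
    refine ⟨α.symm (r j), ?_, ?_⟩
    · simp only [mem_filter, mem_univ, true_and]
      have e : α.symm (r j) = r (α j) := by rw [← hrar (r j), hr2]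
      rw [e, hSr, hra, Equiv.symm_apply_apply, hSr]
      exact hj
    · rw [Equiv.apply_symm_apply, hr2]
end

section
/- Let (X, A, f, α) be an invertible micro-macro dynamical system. Then for all a, b ∈ A, the detailed fluctuation relation T_{ab}(α) = e^{S(a) − S(b)} · T_{ba}(α⁻¹) holds. -/
/-! `α` maps the points of `f⁻¹(b)` sent into `f⁻¹(a)` bijectively onto the points of `f⁻¹(a)` that
`α⁻¹` sends into `f⁻¹(b)`, so both transition probabilities have the same numerator; the factor
`e^{S(a) - S(b)} = |f⁻¹(a)| / |f⁻¹(b)|` exchanges the denominators. -/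

open Finset

theorem Equiv.card_filter_and_apply_eq {X Y : Type*} [Fintype X] [Fintype Y]
    (p : X → Prop) (q : Y → Prop) [DecidablePred p] [DecidablePred q] (α : X ≃ Y) :
    #{i | p i ∧ q (α i)} = #{j | q j ∧ p (α.symm j)} :=
  card_equiv α (by simp [and_comm])

theorem card_filter_and_le_card_filter {X : Type*} [Fintype X] (p q : X → Prop)
    [DecidablePred p] [DecidablePred q] : #{i | p i ∧ q i} ≤ #{i | p i} :=
  card_le_card (monotone_filter_right _ fun _ _ h => h.1)

theorem Real.div_eq_exp_log_sub_mul_div {n p q : ℕ} (hnp : n ≤ p) (hnq : n ≤ q) :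
    (n : ℝ) / q = Real.exp (Real.log p - Real.log q) * (n / p) := by
  rcases Nat.eq_zero_or_pos n with rfl | hn
  · simp
  have hp : (0 : ℝ) < p := by exact_mod_cast hn.trans_le hnp
  have hq : (0 : ℝ) < q := by exact_mod_cast hn.trans_le hnq
  rw [Real.exp_sub, Real.exp_log hp, Real.exp_log hq]
  field_simp

theorem stmt9_general {X A : Type*} [Fintype X] [DecidableEq A]
    (f : X → A) (α : X ≃ X)
    (fib : A → ℕ) (hfib : ∀ a, fib a = (univ.filter (fun i => f i = a)).card)
    (S : A → ℝ) (hS : ∀ a, S a = Real.log (fib a))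
    (T : (X → X) → A → A → ℝ)
    (hT : ∀ (β : X → X) a b,
      T β a b = ((univ.filter (fun i => f i = b ∧ f (β i) = a)).card : ℝ) / fib b) :
    ∀ a b, T (⇑α) a b = Real.exp (S a - S b) * T (⇑α.symm) b a := by
  intro a b
  have hflow := α.card_filter_and_apply_eq (f · = b) (f · = a)
  rw [hT, hT, hS, hS, hflow]
  refine Real.div_eq_exp_log_sub_mul_div ?_ ?_
  · rw [hfib]
    exact card_filter_and_le_card_filter _ _
  · rw [← hflow, hfib]
    exact card_filter_and_le_card_filter _ _

/-- Detailed fluctuation relation: `T_{ab}(α) = e^{S(a)-S(b)} T_{ba}(α⁻¹)`. -/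
theorem stmt9 {X A : Type*} [Fintype X] [DecidableEq A]
    (f : X → A) (hf : Function.Surjective f) (α : X ≃ X)
    (fib : A → ℕ) (hfib : ∀ a, fib a = (univ.filter (fun i => f i = a)).card)
    (S : A → ℝ) (hS : ∀ a, S a = Real.log (fib a))
    (T : (X → X) → A → A → ℝ)
    (hT : ∀ (β : X → X) a b,
      T β a b = ((univ.filter (fun i => f i = b ∧ f (β i) = a)).card : ℝ) / fib b) :
    ∀ a b, T (⇑α) a b = Real.exp (S a - S b) * T (⇑α.symm) b a :=
  stmt9_general f α fib hfib S hS T hT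
end

section
/- Let (X, A, f, α, r) be an entropy preserving reversible micro-macro dynamical system and n ≥ 1. For the n-step entropy production rate σₙ(i) = (S(αⁿ(i)) − S(i))/n and the probability q on X given by q(i) = 1/(|A|·|f⁻¹(f(i))|), the density Wₙ(x) = Σ_{i : σₙ(i) = x} q(i) satisfies the fluctuation relation Wₙ(x) = e^{n x} Wₙ(−x) for every x ∈ ℝ. -/
/-!
The map `φ = r ∘ αⁿ` is an involution of `X` (time reversal conjugates `α` to `α⁻¹`), it
reverses the sign of `σₙ`, and the weights satisfy `q i = e^{n σₙ(i)} q (φ i)` because `q` is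
inversely proportional to the fibre size, i.e. to `e^S`. Reindexing the sum defining `Wₙ(x)`
along `φ` turns it into `e^{nx} Wₙ(-x)`.
-/

open Finset Function

theorem sum_filter_eq_exp_mul_sum_filter_neg {X : Type*} [Fintype X] (e : X ≃ X)
    (σ q : X → ℝ) (c : ℝ) (hσ : ∀ i, σ (e i) = -σ i)
    (hq : ∀ i, q i = Real.exp (c * σ i) * q (e i)) (x : ℝ) :
    ∑ i ∈ univ.filter (fun i => σ i = x), q i =
      Real.exp (c * x) * ∑ i ∈ univ.filter (fun i => σ i = -x), q i := by
  rw [mul_sum]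
  refine sum_equiv e (fun i => ?_) (fun i hi => ?_)
  · simp only [mem_filter, mem_univ, true_and, hσ, neg_inj]
  · rw [← (mem_filter.1 hi).2]
    exact hq i

theorem iterate_apply_apply_iterate_of_conj_eq_symm {X : Type*} {r : X → X}
    (hr : Involutive r) (α : X ≃ X) (hrar : ∀ i, r (α (r i)) = α.symm i) (n : ℕ) (i : X) :
    α^[n] (r (α^[n] i)) = r i := by
  have hsemi : Semiconj r α.symm α := fun i => by rw [← hrar, hr]
  calc α^[n] (r (α^[n] i)) = r (α.symm^[n] (α^[n] i)) := (hsemi.iterate_right n _).symm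
    _ = r i := by rw [α.leftInverse_symm.iterate n i]

theorem involutive_comp_iterate_of_conj_eq_symm {X : Type*} {r : X → X}
    (hr : Involutive r) (α : X ≃ X) (hrar : ∀ i, r (α (r i)) = α.symm i) (n : ℕ) :
    Involutive (r ∘ α^[n]) := fun i => by
  simp only [comp_apply, iterate_apply_apply_iterate_of_conj_eq_symm hr α hrar, hr i]

theorem one_div_mul_eq_exp_log_sub_mul {C a b : ℝ} (ha : 0 < a) (hb : 0 < b) :
    1 / (C * a) = Real.exp (Real.log b - Real.log a) * (1 / (C * b)) := by
  rw [Real.exp_sub, Real.exp_log ha, Real.exp_log hb]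
  field_simp

theorem stmt10_general {X A : Type*} [Fintype X] [Fintype A] [DecidableEq A]
    (f : X → A) (α : X ≃ X)
    (r : X → X) (hr2 : ∀ i, r (r i) = i) (hrar : ∀ i, r (α (r i)) = α.symm i)
    (fib : A → ℕ) (hfib : ∀ a, fib a = (univ.filter (fun i => f i = a)).card)
    (hfibr : ∀ i, fib (f (r i)) = fib (f i))
    (S : X → ℝ) (hS : ∀ i, S i = Real.log (fib (f i)))
    (n : ℕ)
    (σ : X → ℝ) (hσ : ∀ i, σ i = (S ((⇑α)^[n] i) - S i) / n)
    (q : X → ℝ) (hq : ∀ i, q i = 1 / ((Fintype.card A : ℝ) * fib (f i)))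
    (W : ℝ → ℝ) (hW : ∀ x, W x = ∑ i ∈ univ.filter (fun i => σ i = x), q i) :
    ∀ x : ℝ, W x = Real.exp (n * x) * W (-x) := by
  have hfib_pos : ∀ i, (0 : ℝ) < fib (f i) := fun i => by
    rw [hfib]
    exact_mod_cast card_pos.2 ⟨i, by simp⟩
  obtain ⟨φ, hφ⟩ : ∃ φ : X ≃ X, ∀ i, φ i = r (α^[n] i) :=
    ⟨(involutive_comp_iterate_of_conj_eq_symm hr2 α hrar n).toPerm, fun _ => rfl⟩
  have hSφ : ∀ i, S (φ i) = S (α^[n] i) := fun i => by rw [hS, hS, hφ, hfibr]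
  have hSφ' : ∀ i, S (α^[n] (φ i)) = S i := fun i => by
    rw [hS, hS, hφ, iterate_apply_apply_iterate_of_conj_eq_symm hr2 α hrar, hfibr]
  have hσφ : ∀ i, σ (φ i) = -σ i := fun i => by
    rw [hσ, hσ, hSφ, hSφ', ← neg_div, neg_sub]
  -- for `n = 0` both sides vanish: `α^[0] i = i`, and `σ i = _ / 0 = 0`
  have hnσ : ∀ i, n * σ i = S (α^[n] i) - S i := fun i => by
    rcases Nat.eq_zero_or_pos n with rfl | hn
    · simp
    · rw [hσ, mul_div_cancel₀ _ (by positivity)]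
  have hqφ : ∀ i, q i = Real.exp (n * σ i) * q (φ i) := fun i => by
    rw [hnσ, hq, hq, hS, hS, hφ, hfibr]
    exact one_div_mul_eq_exp_log_sub_mul (hfib_pos _) (hfib_pos _)
  intro x
  rw [hW, hW]
  exact sum_filter_eq_exp_mul_sum_filter_neg φ σ q n hσφ hqφ x

/-- Fluctuation relation `Wₙ(x) = e^{nx} Wₙ(-x)` for the density of the n-step
entropy production rate with respect to the probability `q(i) = 1/(|A||f⁻¹(f(i))|)`,
on an entropy preserving reversible micro-macro dynamical system. -/
theorem stmt10 {X A : Type*} [Fintype X] [Fintype A] [DecidableEq A]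
    (f : X → A) (hf : Function.Surjective f) (α : X ≃ X)
    (r : X → X) (hr2 : ∀ i, r (r i) = i) (hrar : ∀ i, r (α (r i)) = α.symm i)
    (fib : A → ℕ) (hfib : ∀ a, fib a = (univ.filter (fun i => f i = a)).card)
    (hfibr : ∀ i, fib (f (r i)) = fib (f i))
    (S : X → ℝ) (hS : ∀ i, S i = Real.log (fib (f i)))
    (n : ℕ) (hn : 1 ≤ n)
    (σ : X → ℝ) (hσ : ∀ i, σ i = (S ((⇑α)^[n] i) - S i) / n)
    (q : X → ℝ) (hq : ∀ i, q i = 1 / ((Fintype.card A : ℝ) * fib (f i)))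
    (W : ℝ → ℝ) (hW : ∀ x, W x = ∑ i ∈ univ.filter (fun i => σ i = x), q i) :
    ∀ x : ℝ, W x = Real.exp (n * x) * W (-x) :=
  stmt10_general f α r hr2 hrar fib hfib hfibr S hS n σ hσ q hq W hW
end

section
/- Let (X, π) be a finite set with a partition, π̂_k the union of blocks of cardinality k, and r such that |π̂_r| ≥ |π̂_k| for all k. Then the maximum over all permutations α of X of the number of microstates with strictly decreasing entropy equals |X| − |π̂_r|. -/
/-!
Along the forward orbit of a point, `blk` cannot drop forever. Sending each point of a zone to the
first point of its orbit where `blk` fails to drop is injective on the zone, since on the way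
there `blk` drops strictly and so cannot meet the zone again; hence at least `|π̂_r|` points are
not strict decreases. Conversely, list `X` in increasing order of `blk` and rotate the list by
`|π̂_r|` places: a step back by `|π̂_r|` positions crosses more than a whole zone and so strictly
decreases `blk`, and only the `|π̂_r|` wrap-around steps fail to.
-/

open Finset

section PermStrictDecrease

variable {X β : Type*} [Fintype X] [LinearOrder β] (g : X → β)

section UpperBound

variable (α : Equiv.Perm X)

theorem exists_not_lt_iterate (i : X) : ∃ n, ¬ g ((α ^ (n + 1)) i) < g ((α ^ n) i) := by
  by_contra! h
  have hanti : StrictAnti fun n => g ((α ^ n) i) := strictAnti_nat_of_succ_lt h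
  exact not_injective_infinite_finite (fun n => (α ^ n) i) hanti.injective.of_comp

theorem card_fiber_le_card_filter_not_lt (b : β) :
    #{i | g i = b} ≤ #{i | ¬ g (α i) < g i} := by
  let n i := Nat.find (exists_not_lt_iterate g α i)
  have hdrop : ∀ i m, 0 < m → m ≤ n i → g ((α ^ m) i) < g i := by
    intro i m hm hmn
    have hanti : StrictAntiOn (fun k => g ((α ^ k) i)) (Set.Iic (n i)) :=
      strictAntiOn_Iic_of_succ_lt fun k hk => not_not.1 (Nat.find_min _ hk)
    simpa using hanti (Set.mem_Iic.2 (Nat.zero_le _)) (Set.mem_Iic.2 hmn) hm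
  have hinj : ∀ i i', g i = b → g i' = b → n i' ≤ n i →
      (α ^ n i) i = (α ^ n i') i' → i = i' := by
    intro i i' hi hi' hle heq
    have hshift : (α ^ (n i - n i')) i = i' := by
      apply (α ^ n i').injective
      rw [← Equiv.Perm.mul_apply, ← pow_add, Nat.add_sub_cancel' hle, heq]
    rcases Nat.eq_zero_or_pos (n i - n i') with h0 | hpos
    · simpa [h0] using hshift
    · have := hdrop i _ hpos (Nat.sub_le _ _)
      rw [hshift, hi, hi'] at this
      exact (lt_irrefl b this).elim
  refine card_le_card_of_injOn (fun i => (α ^ n i) i) (fun i _ => ?_) fun i hi i' hi' heq => ?_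
  · simpa [n, pow_succ'] using Nat.find_spec (exists_not_lt_iterate g α i)
  · simp only [coe_filter, mem_univ, true_and, Set.mem_ofPred_eq] at hi hi'
    rcases le_total (n i') (n i) with h | h
    · exact hinj i i' hi hi' h heq
    · exact (hinj i' i hi' hi h heq.symm).symm

theorem card_filter_lt_le (b : β) :
    #{i | g (α i) < g i} ≤ Fintype.card X - #{i | g i = b} := by
  have hfib := card_fiber_le_card_filter_not_lt g α b
  have hsplit := card_filter_add_card_filter_not (s := univ) fun i => g (α i) < g i
  rw [card_univ] at hsplit
  omega

end UpperBound

section Attainability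

theorem exists_equiv_fin_monotone_comp {N : ℕ} (hN : Fintype.card X = N) :
    ∃ σ : Fin N ≃ X, Monotone (g ∘ σ) := by
  let e := (Fintype.equivFinOfCardEq hN).symm
  exact ⟨(Tuple.sort (g ∘ e)).trans e, Tuple.monotone_sort (g ∘ e)⟩

variable {g}

theorem Monotone.lt_of_card_fiber_le {N m : ℕ} {σ : Fin N ≃ X} (hσ : Monotone (g ∘ σ))
    (hfib : ∀ b, #{i | g i = b} ≤ m) {p q : Fin N} (hpq : (p : ℕ) + m ≤ q) :
    g (σ p) < g (σ q) := by
  refine (hσ (Fin.le_def.2 (by omega))).lt_of_ne fun heq => ?_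
  have hsub : (Icc p q).map σ.toEmbedding ⊆ univ.filter (fun i => g i = g (σ p)) := by
    intro x hx
    obtain ⟨y, hy, rfl⟩ := mem_map.1 hx
    obtain ⟨hpy, hyq⟩ := mem_Icc.1 hy
    simpa using le_antisymm (heq ▸ hσ hyq) (hσ hpy)
  have hcard := card_le_card hsub
  rw [card_map, Fin.card_Icc] at hcard
  have := hfib (g (σ p))
  omega

theorem exists_perm_card_filter_lt_eq {m n : ℕ} (hfib : ∀ b, #{i | g i = b} ≤ m)
    (hcard : Fintype.card X = m + n) : ∃ α : Equiv.Perm X, #{i | g (α i) < g i} = n := by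
  obtain ⟨σ, hσ⟩ := exists_equiv_fin_monotone_comp g hcard
  let ρ : Equiv.Perm (Fin (m + n)) := finAddFlip.trans (finCongr (add_comm n m))
  have hρ : ∀ q, g (σ (ρ q)) < g (σ q) ↔ ¬ (q : ℕ) < m := by
    rintro ⟨q, hq⟩
    rcases lt_or_ge q m with h | h
    · simp only [ρ, Equiv.trans_apply, finAddFlip_apply_mk_left h, finCongr_apply, h,
        not_true_eq_false, iff_false, not_lt]
      exact hσ (Fin.le_def.2 (by simp))
    · simp only [ρ, Equiv.trans_apply, finAddFlip_apply_mk_right h hq, finCongr_apply,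
        not_lt.2 h, not_false_eq_true, iff_true]
      exact hσ.lt_of_card_fiber_le hfib (by simp only [Fin.val_cast]; omega)
  refine ⟨σ.permCongr ρ, ?_⟩
  calc #{i | g (σ.permCongr ρ i) < g i}
      = #{q : Fin (m + n) | ¬ (q : ℕ) < m} :=
        card_equiv σ.symm fun i => by
          rw [mem_filter, mem_filter, ← hρ, Equiv.permCongr_apply, Equiv.apply_symm_apply]
          simp only [mem_univ, true_and]
    _ = n := by
        have := card_filter_add_card_filter_not (s := univ) fun q : Fin (m + n) => (q : ℕ) < m
        rw [Fin.card_filter_val_lt, card_univ, Fintype.card_fin] at this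
        omega

end Attainability

end PermStrictDecrease

theorem stmt13_general {X : Type*} [Fintype X]
    (blk : X → ℕ)
    (zone : ℕ → Finset X) (hzone : ∀ k, zone k = univ.filter (fun i => blk i = k))
    (r : ℕ) (hr : ∀ k, (zone k).card ≤ (zone r).card) :
    IsGreatest
      (Set.range fun α : Equiv.Perm X =>
        (univ.filter (fun i => blk (α i) < blk i)).card)
      (Fintype.card X - (zone r).card) := by
  have hfib : ∀ k, #{i | blk i = k} ≤ (zone r).card := fun k => hzone k ▸ hr k
  obtain ⟨n, hn⟩ : ∃ n, Fintype.card X = (zone r).card + n :=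
    Nat.exists_eq_add_of_le (card_le_univ _)
  obtain ⟨α, hα⟩ := exists_perm_card_filter_lt_eq hfib hn
  refine ⟨⟨α, hα.trans (by omega)⟩, ?_⟩
  rintro _ ⟨α, rfl⟩
  simpa only [hzone r] using card_filter_lt_le blk α r

/-- The maximum over all permutations of the number of strict entropy decreases
equals `|X| - |π̂_r|`, where `π̂_r` is a zone of maximal cardinality. -/
theorem stmt13 {X A : Type*} [Fintype X] [DecidableEq A]
    (f : X → A) (hf : Function.Surjective f)
    (blk : X → ℕ) (hblk : ∀ i, blk i = (univ.filter (fun j => f j = f i)).card)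
    (zone : ℕ → Finset X) (hzone : ∀ k, zone k = univ.filter (fun i => blk i = k))
    (r : ℕ) (hr : ∀ k, (zone k).card ≤ (zone r).card) :
    IsGreatest
      (Set.range fun α : Equiv.Perm X =>
        (univ.filter (fun i => blk (α i) < blk i)).card)
      (Fintype.card X - (zone r).card) :=
  stmt13_general blk zone hzone r hr
end

section
/- Let (X, π, α) be an invertible micro-macro dynamical system with zero jump, i.e. for every i ∈ X there is no block of π whose cardinality lies strictly between the block-sizes of i and α(i). Then |I| = |D|: the number of strict entropy increases equals the number of strict decreases. -/
open Finset

private lemma aux_count (V : Finset ℕ) (a b : ℕ) (ha : a ∈ V)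
    (hj : ∀ t ∈ V, ¬ (min a b < t ∧ t < max a b)) :
    (V.filter (fun t => a ≤ t ∧ t < b)).card = if a < b then 1 else 0 := by
  split_ifs with h
  · have hset : V.filter (fun t => a ≤ t ∧ t < b) = {a} := by
      ext t
      simp only [mem_filter, mem_singleton]
      constructor
      · rintro ⟨htV, hle, hlt⟩
        by_contra hne
        exact hj t htV ⟨by omega, by omega⟩
      · rintro rfl; exact ⟨ha, le_rfl, h⟩
    rw [hset, card_singleton]
  · rw [filter_eq_empty_iff.mpr]
    · simp
    · intro t _; push_neg; intro hle; omega

/-- For a zero jump invertible micro-macro dynamical system, the number of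
strict entropy increases equals the number of strict decreases. -/
theorem stmt15 {X A : Type*} [Fintype X] [DecidableEq A]
    (f : X → A) (hf : Function.Surjective f) (α : X ≃ X)
    (blk : X → ℕ) (hblk : ∀ i, blk i = (univ.filter (fun j => f j = f i)).card)
    (hjump : ∀ i, ∀ a : A,
      ¬ ((univ.filter (fun j => f j = a)).card ∈
          Set.Ioo (min (blk i) (blk (α i))) (max (blk i) (blk (α i))))) :
    (univ.filter (fun i => blk i < blk (α i))).card
      = (univ.filter (fun i => blk (α i) < blk i)).card := by
  classical
  set V : Finset ℕ := univ.image blk with hV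
  have hVj : ∀ i, ∀ t ∈ V,
      ¬ (min (blk i) (blk (α i)) < t ∧ t < max (blk i) (blk (α i))) := by
    intro i t ht
    rw [hV, mem_image] at ht
    obtain ⟨j, -, rfl⟩ := ht
    have := hjump i (f j)
    rw [Set.mem_Ioo] at this
    rwa [hblk j]
  have hmemV : ∀ i : X, blk i ∈ V := fun i => mem_image_of_mem blk (mem_univ i)
  -- per-threshold crossing counts are equal
  have key : ∀ t : ℕ, (univ.filter (fun i : X => blk i ≤ t ∧ t < blk (α i))).card
      = (univ.filter (fun i : X => blk (α i) ≤ t ∧ t < blk i)).card := by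
    intro t
    have hperm : (univ.filter (fun i : X => t < blk (α i))).card
        = (univ.filter (fun i : X => t < blk i)).card := by
      apply Finset.card_bij (fun i _ => α i)
      · intro i hi; simp only [mem_filter, mem_univ, true_and] at hi ⊢; exact hi
      · intro a _ b _ h; exact α.injective h
      · intro b hb
        refine ⟨α.symm b, ?_, by simp⟩
        simp only [mem_filter, mem_univ, true_and, Equiv.apply_symm_apply] at hb ⊢
        exact hb
    have h1 := Finset.card_filter_add_card_filter_not
      (s := univ.filter (fun i : X => t < blk (α i))) (p := fun i => blk i ≤ t)
    have h2 := Finset.card_filter_add_card_filter_not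
      (s := univ.filter (fun i : X => t < blk i)) (p := fun i => blk (α i) ≤ t)
    rw [filter_filter, filter_filter] at h1 h2
    have e1 : (univ.filter (fun i : X => t < blk (α i) ∧ blk i ≤ t)).card
        = (univ.filter (fun i : X => blk i ≤ t ∧ t < blk (α i))).card := by
      congr 1; apply filter_congr; intro i _; simp [and_comm]
    have e2 : (univ.filter (fun i : X => t < blk i ∧ blk (α i) ≤ t)).card
        = (univ.filter (fun i : X => blk (α i) ≤ t ∧ t < blk i)).card := by
      congr 1; apply filter_congr; intro i _; simp [and_comm]
    have e3 : (univ.filter (fun i : X => t < blk (α i) ∧ ¬ blk i ≤ t)).card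
        = (univ.filter (fun i : X => t < blk i ∧ ¬ blk (α i) ≤ t)).card := by
      congr 1; apply filter_congr; intro i _
      simp only [not_le]; constructor <;> exact fun h => ⟨h.2, h.1⟩
    omega
  -- double counting
  have expand : ∀ (g : X → ℕ → Prop) [∀ i t, Decidable (g i t)],
      ∑ t ∈ V, (univ.filter (fun i : X => g i t)).card
        = ∑ i : X, (V.filter (fun t => g i t)).card := by
    intro g _
    simp only [Finset.card_filter]
    exact Finset.sum_comm
  have inc : (univ.filter (fun i : X => blk i < blk (α i))).card
      = ∑ t ∈ V, (univ.filter (fun i : X => blk i ≤ t ∧ t < blk (α i))).card := by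
    rw [expand]
    rw [Finset.card_filter]
    apply Finset.sum_congr rfl
    intro i _
    rw [aux_count V (blk i) (blk (α i)) (hmemV i) (hVj i)]
  have dec : (univ.filter (fun i : X => blk (α i) < blk i)).card
      = ∑ t ∈ V, (univ.filter (fun i : X => blk (α i) ≤ t ∧ t < blk i)).card := by
    rw [expand]
    rw [Finset.card_filter]
    apply Finset.sum_congr rfl
    intro i _
    rw [aux_count V (blk (α i)) (blk i) (hmemV (α i)) ?_]
    intro t ht
    have := hVj i t ht
    omega
  rw [inc, dec]
  exact Finset.sum_congr rfl fun t _ => key t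
end

section
/- Let (X, π, α) be an invertible micro-macro dynamical system such that every α-orbit c satisfies |c ∩ X^eq| ≥ (1 − ε)|c| (property G₀(ε)). Let r(i) be the length of the α-orbit of i and e(i) the equilibrium reaching time. Then the average of e/r over X (uniform probability) is at most ε: (1/|X|) Σ_{i∈X} e(i)/r(i) ≤ ε. -/
open Finset

/-- If each orbit consists mostly of equilibrium microstates
(`|c ∩ X^eq| ≥ (1-ε)|c|`), then the mean of (equilibrium reaching time)/(orbit
length) over `X` is at most `ε`. -/
theorem stmt17 {X A : Type*} [Fintype X] [Nonempty X] [DecidableEq A]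
    (f : X → A) (hf : Function.Surjective f) (α : X ≃ X)
    (blk : X → ℕ) (hblk : ∀ i, blk i = (univ.filter (fun j => f j = f i)).card)
    (Xeq : Set X) (hXeq : Xeq = {i : X | ∀ j, blk j ≤ blk i})
    (orb : X → Set X) (horb : ∀ i, orb i = {j : X | ∃ k : ℕ, (⇑α)^[k] i = j})
    (ε : ℝ)
    (hG : ∀ i, (1 - ε) * ((orb i).ncard : ℝ) ≤ ((orb i ∩ Xeq).ncard : ℝ))
    (e : X → ℕ)
    (he : ∀ i, (⇑α)^[e i] i ∈ Xeq ∧ ∀ k < e i, (⇑α)^[k] i ∉ Xeq) :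
    (1 / (Fintype.card X : ℝ)) * ∑ i : X, (e i : ℝ) / ((orb i).ncard : ℝ) ≤ ε := by
  classical
  have hpos : ∀ i : X, 0 < ((orb i).ncard : ℝ) := by
    intro i
    have hmem : i ∈ orb i := by rw [horb]; exact ⟨0, rfl⟩
    exact_mod_cast Set.ncard_pos (Set.toFinite _) |>.mpr ⟨i, hmem⟩
  -- pointwise bound : e i ≤ ε * |orb i|
  have key : ∀ i : X, (e i : ℝ) / ((orb i).ncard : ℝ) ≤ ε := by
    intro i
    -- the first e i iterates are distinct and lie in orb i \ Xeq
    have hinj : Set.InjOn (fun k => (⇑α)^[k] i) ↑(Finset.range (e i)) := by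
      intro k hk l hl hkl
      simp only [Finset.coe_range, Set.mem_Iio] at hk hl
      simp only [] at hkl
      by_contra hne
      -- wlog k < l
      rcases lt_trichotomy k l with h | h | h
      · -- k < l
        set p := l - k with hp
        have hp0 : 0 < p := Nat.sub_pos_of_lt h
        have hper : Function.IsPeriodicPt (⇑α) p ((⇑α)^[k] i) := by
          show (⇑α)^[p] ((⇑α)^[k] i) = (⇑α)^[k] i
          rw [← Function.iterate_add_apply, hp, Nat.sub_add_cancel h.le, ← hkl]
        have hq : (⇑α)^[(e i - k) % p + k] i ∈ Xeq := by
          have := hper.iterate_mod_apply (e i - k)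
          rw [Function.iterate_add_apply, this, ← Function.iterate_add_apply,
            Nat.sub_add_cancel (le_of_lt (lt_trans h hl))]
          exact (he i).1
        have hlt : (e i - k) % p + k < e i := by
          have := Nat.mod_lt (e i - k) hp0
          omega
        exact (he i).2 _ hlt hq
      · exact hne h
      · -- l < k : symmetric
        set p := k - l with hp
        have hp0 : 0 < p := Nat.sub_pos_of_lt h
        have hper : Function.IsPeriodicPt (⇑α) p ((⇑α)^[l] i) := by
          show (⇑α)^[p] ((⇑α)^[l] i) = (⇑α)^[l] i
          rw [← Function.iterate_add_apply, hp, Nat.sub_add_cancel h.le, hkl]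
        have hq : (⇑α)^[(e i - l) % p + l] i ∈ Xeq := by
          have := hper.iterate_mod_apply (e i - l)
          rw [Function.iterate_add_apply, this, ← Function.iterate_add_apply,
            Nat.sub_add_cancel (le_of_lt (lt_trans h hk))]
          exact (he i).1
        have hlt : (e i - l) % p + l < e i := by
          have := Nat.mod_lt (e i - l) hp0
          omega
        exact (he i).2 _ hlt hq
    have hmaps : ∀ k ∈ Finset.range (e i), (⇑α)^[k] i ∈ (orb i \ Xeq).toFinset := by
      intro k hk
      rw [Set.mem_toFinset]
      refine ⟨?_, (he i).2 k (Finset.mem_range.mp hk)⟩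
      rw [horb]; exact ⟨k, rfl⟩
    have hcard : e i ≤ (orb i \ Xeq).ncard := by
      have := Finset.card_le_card_of_injOn (fun k => (⇑α)^[k] i) hmaps hinj
      rwa [Finset.card_range, ← Set.ncard_eq_toFinset_card'] at this
    have hdiff : (orb i ∩ Xeq).ncard + (orb i \ Xeq).ncard = (orb i).ncard :=
      Set.ncard_inter_add_ncard_diff_eq_ncard (orb i) Xeq (Set.toFinite _)
    have h1 : (e i : ℝ) ≤ ε * ((orb i).ncard : ℝ) := by
      have h2 : ((orb i \ Xeq).ncard : ℝ) = ((orb i).ncard : ℝ) - ((orb i ∩ Xeq).ncard : ℝ) := by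
        have := hdiff
        push_cast [← this]
        ring
      have h3 : (e i : ℝ) ≤ ((orb i \ Xeq).ncard : ℝ) := by exact_mod_cast hcard
      nlinarith [hG i]
    rw [div_le_iff₀ (hpos i)]
    exact h1
  calc (1 / (Fintype.card X : ℝ)) * ∑ i : X, (e i : ℝ) / ((orb i).ncard : ℝ)
      ≤ (1 / (Fintype.card X : ℝ)) * ∑ _i : X, ε := by
        apply mul_le_mul_of_nonneg_left (Finset.sum_le_sum fun i _ => key i)
        positivity
    _ = ε := by
        rw [Finset.sum_const, Finset.card_univ, nsmul_eq_mul]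
        have : (Fintype.card X : ℝ) ≠ 0 := by
          simp [Fintype.card_ne_zero]
        field_simp
end
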